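/- Let O ∼ Haar(SO(n)) and Q ∼ Haar(O(n)), and let A ∈ ℝ^{n×k} with k < n. Then OA and QA are equal in distribution. -/

import Mathlib

open MeasureTheory Matrix

/-- Borel/pi measurable structure on real matrices (via `Matrix m n ℝ := m → n → ℝ`). -/
instance matrixMeasurableSpace {m n : Type*} : MeasurableSpace (Matrix m n ℝ) :=
  MeasurableSpace.pi

/-!
Let `x ∼ Haar(SO(n))` and `y ∼ Haar(O(n))` be independent and look at the law of `x * y * A`.
Conditionally on `x ∈ SO(n) ⊆ O(n)`, left invariance of `Haar(O(n))` makes it the law of `y * A`.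
Conditionally on `y`, since `k < n` there is a Householder reflection `W` fixing the columns of
`A`, so `y * A = S * A` with `S = y` or `S = y * W` in `SO(n)`; the law is then that of
`x * S * A`, which is the law of `x * A` because a left-invariant probability measure on `SO(n)`
is also right invariant.
-/

namespace MeasureTheory.Measure

section

variable {α β γ : Type*} [MeasurableSpace α] [MeasurableSpace β] [MeasurableSpace γ]
  {μ : Measure α} {ν : Measure β} {F : α × β → γ} {ρ : Measure γ}

theorem map_prod_eq_of_ae_map_left [IsProbabilityMeasure μ] [SFinite ν] (hF : Measurable F)
    (h : ∀ᵐ x ∂μ, ν.map (fun y => F (x, y)) = ρ) : (μ.prod ν).map F = ρ := by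
  ext s hs
  rw [map_apply hF hs, prod_apply (hF hs)]
  calc ∫⁻ x, ν (Prod.mk x ⁻¹' (F ⁻¹' s)) ∂μ = ∫⁻ _, ρ s ∂μ := by
        refine lintegral_congr_ae ?_
        filter_upwards [h] with x hx
        rw [← hx, map_apply (f := fun y => F (x, y)) (hF.comp measurable_prodMk_left) hs]
        rfl
    _ = ρ s := by simp

theorem map_prod_eq_of_ae_map_right [SFinite μ] [IsProbabilityMeasure ν] (hF : Measurable F)
    (h : ∀ᵐ y ∂ν, μ.map (fun x => F (x, y)) = ρ) : (μ.prod ν).map F = ρ := by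
  rw [← prod_swap, map_map hF measurable_swap]
  exact map_prod_eq_of_ae_map_left (hF.comp measurable_swap) h

end

/-- Both `μ.map (· * g)` and `μ.map star` are the law of `star x * y * g` for independent
`x, y ∼ μ`, computed by conditioning on `x` and on `y` respectively. -/
theorem map_mul_right_eq_self_of_map_mul_left {M : Type*} [Monoid M] [StarMul M]
    [MeasurableSpace M] [MeasurableMul₂ M] (hstar : Measurable (star : M → M))
    {G : Submonoid M} (hGstar : ∀ g ∈ G, star g ∈ G)
    {μ : Measure M} [IsProbabilityMeasure μ] (hμG : ∀ᵐ x ∂μ, x ∈ G)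
    (hinv : ∀ g ∈ G, μ.map (g * ·) = μ) {g : M} (hg : g ∈ G) :
    μ.map (· * g) = μ := by
  have map_mul_eq_map_star : ∀ g ∈ G, μ.map (· * g) = μ.map star := by
    intro g hg
    have hF : Measurable fun p : M × M => star p.1 * p.2 * g :=
      ((hstar.comp measurable_fst).mul measurable_snd).mul_const g
    calc μ.map (· * g) = (μ.prod μ).map fun p => star p.1 * p.2 * g :=
          (map_prod_eq_of_ae_map_left hF ?_).symm
      _ = μ.map star := map_prod_eq_of_ae_map_right hF ?_
    · filter_upwards [hμG] with x hx
      change μ.map ((· * g) ∘ (star x * ·)) = _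
      rw [← map_map (measurable_mul_const g) (measurable_const_mul _), hinv _ (hGstar x hx)]
    · filter_upwards [hμG] with y hy
      have : (fun x => star x * y * g) = star ∘ (star (y * g) * ·) := by
        funext x
        simp [mul_assoc]
      rw [this, ← map_map hstar (measurable_const_mul _), hinv _ (hGstar _ (G.mul_mem hy hg))]
  rw [map_mul_eq_map_star g hg, ← map_mul_eq_map_star 1 G.one_mem]
  simp [map_id']

end MeasureTheory.Measure

namespace Matrix

section Householder

variable {K ι : Type*} [Field K] [Fintype ι] [DecidableEq ι] {v : ι → K}

def householder (v : ι → K) : Matrix ι ι K :=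
  1 - (2 / (v ⬝ᵥ v)) • vecMulVec v v

theorem householder_transpose (v : ι → K) : (householder v)ᵀ = householder v := by
  simp [householder, transpose_vecMulVec]

theorem householder_mul_self (hv : v ⬝ᵥ v ≠ 0) : householder v * householder v = 1 := by
  have hsq : vecMulVec v v * vecMulVec v v = (v ⬝ᵥ v) • vecMulVec v v := by
    rw [vecMulVec_mul_vecMulVec, vecMulVec_smul]
  simp only [householder, sub_mul, mul_sub, one_mul, mul_one, smul_mul_smul_comm, hsq, smul_smul]
  rw [show 2 / (v ⬝ᵥ v) * (2 / (v ⬝ᵥ v)) * (v ⬝ᵥ v) = 2 / (v ⬝ᵥ v) + 2 / (v ⬝ᵥ v) by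
    field_simp; ring, add_smul]
  abel

theorem det_householder (hv : v ⬝ᵥ v ≠ 0) : (householder v).det = -1 := by
  rw [householder, sub_eq_add_neg, ← neg_smul, ← vecMulVec_smul, vecMulVec_eq (Fin 1),
    det_one_add_replicateCol_mul_replicateRow]
  simp only [smul_dotProduct, smul_eq_mul]
  field_simp
  ring

theorem householder_mul_of_vecMul_eq_zero {κ : Type*} {A : Matrix ι κ K} (hA : v ᵥ* A = 0) :
    householder v * A = A := by
  rw [householder, Matrix.sub_mul, Matrix.one_mul, Matrix.smul_mul, vecMulVec_mul, hA]
  ext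
  simp [vecMulVec_apply]

end Householder

theorem exists_ne_zero_vecMul_eq_zero {K m n : Type*} [Field K] [Fintype m] [Fintype n]
    (hmn : Fintype.card n < Fintype.card m) (A : Matrix m n K) : ∃ v ≠ 0, v ᵥ* A = 0 := by
  obtain ⟨v, hv, hv0⟩ := Submodule.exists_mem_ne_zero_of_ne_bot
    (LinearMap.ker_ne_bot_of_finrank_lt (f := A.vecMulLinear) (by simpa using hmn))
  exact ⟨v, hv0, hv⟩

theorem exists_mem_orthogonalGroup_det_eq_neg_one_mul_eq {ι κ : Type*} [Fintype ι]
    [DecidableEq ι] [Fintype κ] (hκι : Fintype.card κ < Fintype.card ι) (A : Matrix ι κ ℝ) :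
    ∃ W ∈ orthogonalGroup ι ℝ, W.det = -1 ∧ W * A = A := by
  obtain ⟨v, hv, hvA⟩ := exists_ne_zero_vecMul_eq_zero hκι A
  have hvv : v ⬝ᵥ v ≠ 0 := fun h => hv (dotProduct_self_eq_zero.1 h)
  refine ⟨householder v, ?_, det_householder hvv, householder_mul_of_vecMul_eq_zero hvA⟩
  rw [mem_orthogonalGroup_iff', householder_transpose, householder_mul_self hvv]

theorem det_eq_one_or_neg_one_of_mem_orthogonalGroup {ι : Type*} [Fintype ι] [DecidableEq ι]
    {Q : Matrix ι ι ℝ} (hQ : Q ∈ orthogonalGroup ι ℝ) : Q.det = 1 ∨ Q.det = -1 :=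
  mul_self_eq_one_iff.1 (by simpa using (det_of_mem_unitary hQ).1)

theorem exists_mem_specialOrthogonalGroup_mul_eq {ι κ : Type*} [Fintype ι] [DecidableEq ι]
    [Fintype κ] (hκι : Fintype.card κ < Fintype.card ι) (A : Matrix ι κ ℝ) {Q : Matrix ι ι ℝ}
    (hQ : Q ∈ orthogonalGroup ι ℝ) : ∃ S ∈ specialOrthogonalGroup ι ℝ, S * A = Q * A := by
  rcases det_eq_one_or_neg_one_of_mem_orthogonalGroup hQ with hdet | hdet
  · exact ⟨Q, mem_specialOrthogonalGroup_iff.2 ⟨hQ, hdet⟩, rfl⟩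
  · obtain ⟨W, hW, hWdet, hWA⟩ := exists_mem_orthogonalGroup_det_eq_neg_one_mul_eq hκι A
    refine ⟨Q * W, mem_specialOrthogonalGroup_iff.2 ⟨mul_mem hQ hW, ?_⟩, ?_⟩
    · rw [det_mul, hdet, hWdet, neg_one_mul, neg_neg]
    · rw [Matrix.mul_assoc, hWA]

instance {m n : Type*} [Fintype m] [Fintype n] : BorelSpace (Matrix m n ℝ) :=
  inferInstanceAs (BorelSpace (m → n → ℝ))

instance {m n : Type*} [Fintype m] [Fintype n] : SecondCountableTopology (Matrix m n ℝ) :=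
  inferInstanceAs (SecondCountableTopology (m → n → ℝ))

theorem measurable_mul_const_matrix {l m n : Type*} [Fintype l] [Fintype m] [Fintype n]
    (A : Matrix m n ℝ) :
    Measurable fun Q : Matrix l m ℝ => Q * A :=
  (continuous_id.matrix_mul continuous_const).measurable

end Matrix

/-- Let `O ∼ Haar(SO(n))` and `Q ∼ Haar(O(n))` — modelled as probability
measures on `n × n` real matrices that are supported on the respective groups and
left-invariant under the respective group actions — and let `A ∈ ℝ^{n×k}` with `k < n`.
Then `OA` and `QA` are equal in distribution. -/
theorem stmt13 {n k : ℕ} (hk : k < n)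
    (μO μSO : Measure (Matrix (Fin n) (Fin n) ℝ))
    [IsProbabilityMeasure μO] [IsProbabilityMeasure μSO]
    (hOsupp : μO {Q | Qᵀ * Q = 1}ᶜ = 0)
    (hSOsupp : μSO {Q | Qᵀ * Q = 1 ∧ Q.det = 1}ᶜ = 0)
    (hOinv : ∀ R : Matrix (Fin n) (Fin n) ℝ, Rᵀ * R = 1 →
      μO.map (fun Q => R * Q) = μO)
    (hSOinv : ∀ R : Matrix (Fin n) (Fin n) ℝ, Rᵀ * R = 1 → R.det = 1 →
      μSO.map (fun Q => R * Q) = μSO)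
    (A : Matrix (Fin n) (Fin k) ℝ) :
    μSO.map (fun Q => Q * A) = μO.map (fun Q => Q * A) := by
  have hO : ∀ᵐ Q ∂μO, Q ∈ orthogonalGroup (Fin n) ℝ :=
    Filter.Eventually.mono (mem_ae_iff.2 hOsupp) fun _ hQ => (mem_orthogonalGroup_iff' _ _).2 hQ
  have hSO : ∀ᵐ Q ∂μSO, Q ∈ specialOrthogonalGroup (Fin n) ℝ :=
    Filter.Eventually.mono (mem_ae_iff.2 hSOsupp) fun _ hQ =>
      mem_specialOrthogonalGroup_iff.2 ⟨(mem_orthogonalGroup_iff' _ _).2 hQ.1, hQ.2⟩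
  have hSOright : ∀ S ∈ specialOrthogonalGroup (Fin n) ℝ, μSO.map (· * S) = μSO :=
    fun _ => Measure.map_mul_right_eq_self_of_map_mul_left continuous_star.measurable
      (fun g hg => (star (⟨g, hg⟩ : specialOrthogonalGroup (Fin n) ℝ)).2) hSO
      (fun S hS => hSOinv S ((mem_orthogonalGroup_iff' _ _).1 hS.1) hS.2)
  have hF : Measurable fun p : Matrix (Fin n) (Fin n) ℝ × Matrix (Fin n) (Fin n) ℝ =>
      p.1 * p.2 * A := (measurable_mul_const_matrix A).comp measurable_mul
  calc μSO.map (· * A) = (μSO.prod μO).map fun p => p.1 * p.2 * A :=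
        (Measure.map_prod_eq_of_ae_map_right hF ?_).symm
    _ = μO.map (· * A) := Measure.map_prod_eq_of_ae_map_left hF ?_
  · filter_upwards [hO] with Q hQ
    obtain ⟨S, hS, hSA⟩ := exists_mem_specialOrthogonalGroup_mul_eq (by simpa using hk) A hQ
    have : (fun P => P * Q * A) = (· * A) ∘ (· * S) := by
      funext P
      simp [Matrix.mul_assoc, hSA]
    rw [this, ← Measure.map_map (measurable_mul_const_matrix A) (measurable_mul_const S),
      hSOright S hS]
  · filter_upwards [hSO] with P hP
    change μO.map ((· * A) ∘ (P * ·)) = _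
    rw [← Measure.map_map (measurable_mul_const_matrix A) (measurable_const_mul P),
      hOinv P ((mem_orthogonalGroup_iff' _ _).1 hP.1)]
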